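/- arXiv:2309.07089 — 2 statements merged into one kernel-verified Lean document; each statement's English description precedes it below -/
import Mathlib

section
/- Let G be a simple graph on n vertices and let h, k be integers with 1 ≤ h < k ≤ n/2. Then the characteristic polynomial of the Laplacian matrix L(F_h(G)) divides the characteristic polynomial of the Laplacian matrix L(F_k(G)); that is, the Laplacian spectrum of F_h(G), with multiplicities, is contained in the Laplacian spectrum of F_k(G). -/
open Finset Polynomial Real Matrix

noncomputable section

/-- The `k`-token graph of a simple graph `G`. -/
def tokenGraph {V : Type*} [DecidableEq V] (G : SimpleGraph V) (k : ℕ) :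
    SimpleGraph {s : Finset V // s.card = k} where
  Adj A B := ∃ a b, G.Adj a b ∧ a ∈ A.1 ∧ b ∈ B.1 ∧ symmDiff A.1 B.1 = {a, b}
  symm := by
    constructor
    rintro A B ⟨a, b, hab, ha, hb, hd⟩
    exact ⟨b, a, hab.symm, hb, ha, by rw [symmDiff_comm, hd, Finset.pair_comm]⟩
  loopless := by
    constructor
    rintro A ⟨a, b, hab, ha, hb, hd⟩
    rw [symmDiff_self, Finset.bot_eq_empty] at hd
    exact (Finset.insert_ne_empty a {b}) hd.symm

/-- The Laplacian matrix (over ℝ) of a finite simple graph. -/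
def lapMat {V : Type*} [Fintype V] [DecidableEq V] (G : SimpleGraph V) : Matrix V V ℝ :=
  letI := Classical.decRel G.Adj
  G.lapMatrix ℝ

/-- The Laplacian matrix (over ℂ) of a finite simple graph. -/
def lapMatC {V : Type*} [Fintype V] [DecidableEq V] (G : SimpleGraph V) : Matrix V V ℂ :=
  letI := Classical.decRel G.Adj
  G.lapMatrix ℂ

/-- The Laplacian eigenvalues of `G`, with multiplicity, in nondecreasing order. -/
def lapSpec {V : Type*} [Fintype V] [DecidableEq V] (G : SimpleGraph V) : List ℝ :=
  ((lapMat G).charpoly.roots).sort (· ≤ ·)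

/-- The algebraic connectivity: the second-smallest Laplacian eigenvalue. -/
def algConn {V : Type*} [Fintype V] [DecidableEq V] (G : SimpleGraph V) : ℝ :=
  (lapSpec G).getD 1 0

/-- The largest Laplacian eigenvalue (Laplacian spectral radius). -/
def lapSpecRadius {V : Type*} [Fintype V] [DecidableEq V] (G : SimpleGraph V) : ℝ :=
  (lapSpec G).getLastD 0

/-- `μ` is an eigenvalue of the Laplacian matrix of `G`. -/
def IsLapEigen {V : Type*} [Fintype V] [DecidableEq V] (G : SimpleGraph V) (μ : ℝ) : Prop :=
  ∃ v : V → ℝ, v ≠ 0 ∧ (lapMat G).mulVec v = μ • v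

/-- The induced subgraph of `G` on the complement of the vertex `i` (i.e. `G ∖ i`). -/
def deleteVert {V : Type*} (G : SimpleGraph V) (i : V) : SimpleGraph {v : V // v ≠ i} :=
  SimpleGraph.comap Subtype.val G

/-- The cycle graph on `ℤ/nℤ`, where `i` is adjacent to `i ± 1`. -/
def cycleG (n : ℕ) : SimpleGraph (ZMod n) where
  Adj x y := x ≠ y ∧ (x - y = 1 ∨ y - x = 1)
  symm := by constructor; rintro x y ⟨hxy, h⟩; exact ⟨hxy.symm, h.symm⟩
  loopless := by constructor; rintro x ⟨hx, _⟩; exact hx rfl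

/-- The inclusion matrix from `h`-subsets to `k`-subsets: rows indexed by `k`-subsets `A`,
columns by `h`-subsets `X`, with entry `1` if `X ⊆ A` and `0` otherwise. -/
def inclMatrix (V : Type*) [Fintype V] [DecidableEq V] (h k : ℕ) :
    Matrix {s : Finset V // s.card = k} {s : Finset V // s.card = h} ℝ :=
  fun A X => if X.1 ⊆ A.1 then 1 else 0

/-- The `(n;k)`-binomial matrix: rows indexed by `k`-subsets `A`, columns by vertices `j`,
with entry `1` if `j ∈ A` and `0` otherwise. -/
def binomMatrix (V : Type*) [Fintype V] [DecidableEq V] (k : ℕ) :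
    Matrix {s : Finset V // s.card = k} V ℝ :=
  fun A j => if j ∈ A.1 then 1 else 0

/-- The Kneser graph `K(n,k)`. -/
def kneserGraph (n k : ℕ) : SimpleGraph {s : Finset (Fin n) // s.card = k} where
  Adj A B := A ≠ B ∧ Disjoint A.1 B.1
  symm := by constructor; rintro A B ⟨h1, h2⟩; exact ⟨h1.symm, h2.symm⟩
  loopless := by constructor; rintro A ⟨h1, _⟩; exact h1 rfl

end

/-
Each edge `ab` of `G` contributes `I - P_k(a b)` to `L(F_k(G))`, where `P_k(σ)` is the
permutation matrix of `σ` acting on `k`-subsets: `(a b)` moves a `k`-subset `A` exactly when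
`A` contains one endpoint, and then sends `A` to its neighbour across that edge, which in turn
determines the edge as `A ∆ (a b)A`. The inclusion matrix `W_{h,k}` is equivariant,
`P_k(σ) W_{h,k} = W_{h,k} P_h(σ)`, hence `L(F_k) W_{h,k} = W_{h,k} L(F_h)`.
For `h ≤ k ≤ n/2` the matrix `W_{h,k}` is injective: `W_{k,k+1} W_{h,k} = (k+1-h) W_{h,k+1}`
reduces this to `W_{j,j+1}` with `2j < n`, whose Gram matrix is `n I` for `j = 0` and
`W_{j-1,j} W_{j-1,j}ᵀ + (n - 2j) I` otherwise, so positive definite. Thus the image of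
`W_{h,k}` is an `L(F_k)`-invariant subspace on which `L(F_k)` acts as `L(F_h)`, and the
characteristic polynomial of a restriction to an invariant subspace divides that of the map.
-/

theorem LinearMap.charpoly_restrict_dvd {K M : Type*} [Field K] [AddCommGroup M] [Module K M]
    [FiniteDimensional K M] (f : Module.End K M) {W : Submodule K M} (hW : ∀ x ∈ W, f x ∈ W) :
    (f.restrict hW).charpoly ∣ f.charpoly := by
  obtain ⟨W', hWW'⟩ := W.exists_isCompl
  let e := Submodule.prodEquivOfIsCompl W W' hWW'
  let φ := e.symm.conj f
  have hφ (w : W) : φ (w, 0) = (f.restrict hW w, 0) := by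
    have hw : e (w, 0) = w := by simp [e]
    rw [LinearEquiv.conj_apply_apply, LinearEquiv.symm_symm, hw]
    exact Submodule.prodEquivOfIsCompl_symm_apply_left W W' hWW' (f.restrict hW w)
  let bW := Module.finBasis K W
  let b := bW.prod (Module.finBasis K W')
  have h₂₁ : (LinearMap.toMatrix b b φ).toBlocks₂₁ = 0 := by
    ext i j
    simp [toBlocks₂₁, LinearMap.toMatrix_apply, b, hφ]
  have h₁₁ : (LinearMap.toMatrix b b φ).toBlocks₁₁ = LinearMap.toMatrix bW bW (f.restrict hW) := by
    ext i j
    simp [toBlocks₁₁, LinearMap.toMatrix_apply, b, hφ]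
  rw [← e.symm.charpoly_conj f, ← LinearMap.charpoly_toMatrix φ b,
    ← fromBlocks_toBlocks (LinearMap.toMatrix b b φ), h₂₁, h₁₁, charpoly_fromBlocks_zero₂₁,
    LinearMap.charpoly_toMatrix]
  exact dvd_mul_right _ _

theorem Matrix.charpoly_dvd_of_mul_eq_mul {K m p : Type*} [Field K] [Fintype m] [Fintype p]
    [DecidableEq m] [DecidableEq p] {M : Matrix m m K} {N : Matrix p p K} {B : Matrix m p K}
    (hMB : M * B = B * N) (hB : Function.Injective B.mulVec) :
    N.charpoly ∣ M.charpoly := by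
  have hinv : ∀ x ∈ LinearMap.range B.mulVecLin, M.mulVecLin x ∈ LinearMap.range B.mulVecLin := by
    rintro _ ⟨y, rfl⟩
    exact ⟨N *ᵥ y, by simp [mulVec_mulVec, hMB]⟩
  let e := LinearEquiv.ofInjective B.mulVecLin hB
  have hconj : e.conj N.mulVecLin = M.mulVecLin.restrict hinv := by
    ext y : 1
    obtain ⟨x, rfl⟩ := e.surjective y
    apply Subtype.ext
    rw [LinearEquiv.conj_apply_apply, LinearEquiv.symm_apply_apply]
    change B *ᵥ (N *ᵥ x) = M *ᵥ (B *ᵥ x)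
    rw [mulVec_mulVec, mulVec_mulVec, hMB]
  rw [← charpoly_mulVecLin N, ← charpoly_mulVecLin M, ← e.charpoly_conj, hconj]
  exact LinearMap.charpoly_restrict_dvd _ hinv

section TokenGraph

variable {V : Type*}

def edgeSwap [DecidableEq V] (e : Sym2 V) : Equiv.Perm V :=
  Sym2.lift ⟨Equiv.swap, Equiv.swap_comm⟩ e

@[simp]
lemma edgeSwap_mk [DecidableEq V] (a b : V) : edgeSwap s(a, b) = Equiv.swap a b := rfl

def tokenPerm (σ : Equiv.Perm V) (k : ℕ) : Equiv.Perm {s : Finset V // s.card = k} :=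
  σ.finsetCongr.subtypeEquiv fun s => by simp

lemma coe_tokenPerm (σ : Equiv.Perm V) {k : ℕ} (A : {s : Finset V // s.card = k}) :
    (tokenPerm σ k A).1 = A.1.map σ.toEmbedding := rfl

variable [DecidableEq V]

lemma Finset.mem_map_swap {s : Finset V} {a b x : V} :
    x ∈ s.map (Equiv.swap a b).toEmbedding ↔ Equiv.swap a b x ∈ s := by
  rw [mem_map_equiv, Equiv.symm_swap]

lemma Finset.map_swap_eq_self_iff {s : Finset V} {a b : V} :
    s.map (Equiv.swap a b).toEmbedding = s ↔ (a ∈ s ↔ b ∈ s) := by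
  constructor
  · intro h
    have ha := Finset.ext_iff.1 h a
    rwa [mem_map_swap, Equiv.swap_apply_left, Iff.comm] at ha
  · intro h
    ext x
    rw [mem_map_swap]
    rcases eq_or_ne x a with rfl | hxa
    · rw [Equiv.swap_apply_left, h]
    rcases eq_or_ne x b with rfl | hxb
    · rw [Equiv.swap_apply_right, h]
    · rw [Equiv.swap_apply_of_ne_of_ne hxa hxb]

lemma mem_symmDiff_map_edgeSwap {s : Finset V} {e : Sym2 V}
    (he : s.map (edgeSwap e).toEmbedding ≠ s) (x : V) :
    x ∈ symmDiff s (s.map (edgeSwap e).toEmbedding) ↔ x ∈ e := by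
  induction e using Sym2.ind with | _ a b => ?_
  rw [edgeSwap_mk, Ne, map_swap_eq_self_iff] at he
  rw [edgeSwap_mk, Finset.mem_symmDiff, mem_map_swap, Sym2.mem_iff]
  rcases eq_or_ne x a with rfl | hxa
  · simp only [Equiv.swap_apply_left]; tauto
  rcases eq_or_ne x b with rfl | hxb
  · simp only [Equiv.swap_apply_right]; tauto
  · simp [Equiv.swap_apply_of_ne_of_ne hxa hxb, hxa, hxb]

variable {G : SimpleGraph V} {k : ℕ}

lemma tokenGraph_adj_iff {A B : {s : Finset V // s.card = k}} :
    (tokenGraph G k).Adj A B ↔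
      ∃ e ∈ G.edgeSet, tokenPerm (edgeSwap e) k A ≠ A ∧ tokenPerm (edgeSwap e) k A = B := by
  constructor
  · rintro ⟨a, b, hab, ha, hb, hd⟩
    have hd' : ∀ x, (x ∈ A.1 ∧ x ∉ B.1 ∨ x ∈ B.1 ∧ x ∉ A.1) ↔ x = a ∨ x = b := fun x => by
      simpa [Finset.mem_symmDiff] using Finset.ext_iff.1 hd x
    have hbA : b ∉ A.1 := fun h => by have := (hd' b).2 (Or.inr rfl); tauto
    have haB : a ∉ B.1 := fun h => by have := (hd' a).2 (Or.inl rfl); tauto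
    refine ⟨s(a, b), hab, fun h => ?_, Subtype.ext (Finset.ext fun x => ?_)⟩
    · rw [Subtype.ext_iff, coe_tokenPerm, edgeSwap_mk, map_swap_eq_self_iff] at h
      exact hbA (h.1 ha)
    · rw [coe_tokenPerm, edgeSwap_mk, mem_map_swap]
      rcases eq_or_ne x a with rfl | hxa
      · simp [haB, hbA]
      rcases eq_or_ne x b with rfl | hxb
      · simp [ha, hb]
      · rw [Equiv.swap_apply_of_ne_of_ne hxa hxb]
        have := hd' x
        tauto
  · rintro ⟨e, he, hne, rfl⟩
    have hd := mem_symmDiff_map_edgeSwap (fun h => hne (Subtype.ext h))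
    induction e using Sym2.ind with | _ a b => ?_
    rw [Ne, Subtype.ext_iff, coe_tokenPerm, edgeSwap_mk, map_swap_eq_self_iff] at hne
    rw [SimpleGraph.mem_edgeSet] at he
    by_cases ha : a ∈ A.1
    · refine ⟨a, b, he, ha, ?_, Finset.ext fun x => ?_⟩
      · simpa [coe_tokenPerm, mem_map_swap] using ha
      · simpa [coe_tokenPerm, Sym2.mem_iff] using hd x
    · refine ⟨b, a, he.symm, by tauto, ?_, Finset.ext fun x => ?_⟩
      · simp only [coe_tokenPerm, edgeSwap_mk, mem_map_swap, Equiv.swap_apply_left]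
        tauto
      · simpa [coe_tokenPerm, Sym2.mem_iff, or_comm] using hd x

lemma tokenPerm_edgeSwap_injOn (A : {s : Finset V // s.card = k}) :
    Set.InjOn (fun e => tokenPerm (edgeSwap e) k A) {e | tokenPerm (edgeSwap e) k A ≠ A} := by
  intro e he f hf hef
  have hmem (e : Sym2 V) (he : tokenPerm (edgeSwap e) k A ≠ A) :=
    mem_symmDiff_map_edgeSwap (fun h => he (Subtype.ext h))
  exact Sym2.ext fun x => by
    rw [← hmem e he, ← hmem f hf, ← coe_tokenPerm, ← coe_tokenPerm]
    simp only at hef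
    rw [hef]

variable [Fintype V]

lemma lapMat_eq_lapMatrix (H : SimpleGraph V) [DecidableRel H.Adj] :
    lapMat H = H.lapMatrix ℝ := by
  unfold lapMat; congr!

lemma lapMat_tokenGraph_eq_sum [DecidableRel G.Adj] :
    lapMat (tokenGraph G k)
      = ∑ e ∈ G.edgeFinset, (1 - (tokenPerm (edgeSwap e) k).permMatrix ℝ) := by
  classical
  ext A B
  set f := fun e => tokenPerm (edgeSwap e) k A
  have himage : (G.edgeFinset.filter (f · ≠ A)).image f = (tokenGraph G k).neighborFinset A := by
    ext B
    simp [f, tokenGraph_adj_iff, and_assoc]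
  have hinj : Set.InjOn f (G.edgeFinset.filter (f · ≠ A)) := fun e he e' he' =>
    tokenPerm_edgeSwap_injOn A (Finset.mem_filter.1 he).2 (Finset.mem_filter.1 he').2
  calc lapMat (tokenGraph G k) A B
      = (if A = B then ((tokenGraph G k).degree A : ℝ) else 0)
        - if (tokenGraph G k).Adj A B then 1 else 0 := by
        rw [lapMat_eq_lapMatrix, SimpleGraph.lapMatrix, Matrix.sub_apply, SimpleGraph.degMatrix,
          diagonal_apply, SimpleGraph.adjMatrix_apply]
    _ = ∑ C ∈ (tokenGraph G k).neighborFinset A,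
          ((if A = B then 1 else 0) - if C = B then 1 else 0) := by
        rw [sum_sub_distrib, sum_const, SimpleGraph.card_neighborFinset_eq_degree, sum_ite_eq']
        simp [SimpleGraph.mem_neighborFinset]
    _ = ∑ e ∈ G.edgeFinset.filter (f · ≠ A),
          ((if A = B then 1 else 0) - if f e = B then 1 else 0) := by
        rw [← himage, sum_image hinj]
    _ = ∑ e ∈ G.edgeFinset, ((if A = B then 1 else 0) - if f e = B then 1 else 0) := by
        refine sum_filter_of_ne fun e _ hne heq => hne ?_
        rw [heq, sub_self]
    _ = _ := by
        rw [Matrix.sum_apply]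
        refine sum_congr rfl fun e _ => ?_
        simp [one_apply, PEquiv.toMatrix_apply, f]

lemma permMatrix_tokenPerm_mul_inclMatrix (σ : Equiv.Perm V) (h k : ℕ) :
    (tokenPerm σ k).permMatrix ℝ * inclMatrix V h k
      = inclMatrix V h k * (tokenPerm σ h).permMatrix ℝ := by
  rw [PEquiv.toMatrix_toPEquiv_mul, PEquiv.mul_toMatrix_toPEquiv]
  ext A X
  have hsymm : ((tokenPerm σ h).symm X).1 = X.1.map σ.symm.toEmbedding := rfl
  simp only [submatrix_apply, id, inclMatrix, coe_tokenPerm, hsymm, Finset.subset_iff,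
    mem_map_equiv, Equiv.symm_symm]
  congr 1
  exact propext ⟨fun H x hx => by simpa using H hx, fun H x hx => H (by simpa using hx)⟩

lemma lapMat_tokenGraph_mul_inclMatrix (G : SimpleGraph V) (h k : ℕ) :
    lapMat (tokenGraph G k) * inclMatrix V h k = inclMatrix V h k * lapMat (tokenGraph G h) := by
  classical
  rw [lapMat_tokenGraph_eq_sum, lapMat_tokenGraph_eq_sum, Matrix.sum_mul, Matrix.mul_sum]
  refine sum_congr rfl fun e _ => ?_
  rw [Matrix.sub_mul, Matrix.mul_sub, Matrix.one_mul, Matrix.mul_one,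
    permMatrix_tokenPerm_mul_inclMatrix]

end TokenGraph

theorem Matrix.mulVec_injective_of_posDef_conjTranspose_mul_self {R m n : Type*} [Ring R]
    [PartialOrder R] [StarRing R] [Fintype m] [Fintype n] {M : Matrix m n R}
    (hM : (Mᴴ * M).PosDef) : Function.Injective M.mulVec := by
  intro x y hxy
  by_contra hne
  have hpos := hM.dotProduct_mulVec_pos (sub_ne_zero.2 hne)
  rw [← mulVec_mulVec, mulVec_sub, hxy, sub_self, mulVec_zero, dotProduct_zero] at hpos
  exact hpos.false

section InclusionMatrix

variable {V : Type*} [Fintype V] [DecidableEq V]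

lemma card_filter_subset_subset {X Y : Finset V} (hXY : X ⊆ Y) {m : ℕ} (hm : X.card ≤ m) :
    #{C : {s : Finset V // s.card = m} | X ⊆ C.1 ∧ C.1 ⊆ Y} = (Y \ X).card.choose (m - X.card) := by
  rw [← card_powersetCard]
  refine card_bij (fun C _ => C.1 \ X) (fun C hC => ?_) (fun C hC C' hC' h => ?_) fun D hD => ?_
  · obtain ⟨hXC, hCY⟩ := (mem_filter.1 hC).2
    rw [mem_powersetCard, card_sdiff_of_subset hXC, C.2]
    exact ⟨sdiff_subset_sdiff hCY le_rfl, rfl⟩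
  · have hXC := (mem_filter.1 hC).2.1
    have hXC' := (mem_filter.1 hC').2.1
    exact Subtype.ext (by rw [← sdiff_union_of_subset hXC, ← sdiff_union_of_subset hXC', h])
  · obtain ⟨hDY, hD⟩ := mem_powersetCard.1 hD
    have hDX : Disjoint D X := disjoint_of_subset_left hDY sdiff_disjoint
    refine ⟨⟨D ∪ X, by rw [card_union_of_disjoint hDX, hD]; omega⟩, ?_,
      union_sdiff_cancel_right hDX⟩
    exact mem_filter.2 ⟨mem_univ _, subset_union_right,
      union_subset (hDY.trans sdiff_subset) hXY⟩

lemma inclMatrix_self (k : ℕ) : inclMatrix V k k = 1 := by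
  ext A X
  simp only [inclMatrix, one_apply, Subtype.ext_iff]
  exact if_congr ⟨fun h => (eq_of_subset_of_card_le h (by rw [A.2, X.2])).symm,
    fun h => h ▸ subset_rfl⟩ rfl rfl

lemma inclMatrix_mul_inclMatrix {h k : ℕ} (hhk : h ≤ k) :
    inclMatrix V k (k + 1) * inclMatrix V h k = ((k + 1 - h : ℕ) : ℝ) • inclMatrix V h (k + 1) := by
  ext A X
  have hsum : (inclMatrix V k (k + 1) * inclMatrix V h k) A X
      = #{C : {s : Finset V // s.card = k} | X.1 ⊆ C.1 ∧ C.1 ⊆ A.1} := by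
    simp [mul_apply, inclMatrix, ← ite_and, sum_boole]
  rw [hsum, Matrix.smul_apply, inclMatrix, smul_eq_mul]
  split_ifs with hXA
  · rw [card_filter_subset_subset hXA (X.2.symm ▸ hhk), card_sdiff_of_subset hXA, A.2, X.2,
      show k + 1 - h = k - h + 1 by omega, Nat.choose_succ_self_right, mul_one]
  · rw [mul_zero, Nat.cast_eq_zero, card_eq_zero, filter_eq_empty_iff]
    exact fun C _ hC => hXA (hC.1.trans hC.2)

lemma transpose_inclMatrix_mul_self_apply (h k : ℕ) (X Y : {s : Finset V // s.card = h}) :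
    ((inclMatrix V h k)ᵀ * inclMatrix V h k) X Y
      = #{A : {s : Finset V // s.card = k} | X.1 ∪ Y.1 ⊆ A.1} := by
  simp [mul_apply, inclMatrix, ← ite_and, sum_boole, union_subset_iff, and_comm]

lemma inclMatrix_mul_transpose_self_apply (h k : ℕ) (X Y : {s : Finset V // s.card = k}) :
    (inclMatrix V h k * (inclMatrix V h k)ᵀ) X Y
      = #{Z : {s : Finset V // s.card = h} | Z.1 ⊆ X.1 ∩ Y.1} := by
  simp [mul_apply, inclMatrix, ← ite_and, sum_boole, subset_inter_iff, and_comm]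

lemma transpose_inclMatrix_zero_mul_self :
    (inclMatrix V 0 1)ᵀ * inclMatrix V 0 1 = (Fintype.card V : ℝ) • 1 := by
  ext X Y
  obtain rfl : X = Y := Subtype.ext (by rw [card_eq_zero.1 X.2, card_eq_zero.1 Y.2])
  rw [transpose_inclMatrix_mul_self_apply, Matrix.smul_apply, one_apply_eq, smul_eq_mul, mul_one,
    card_eq_zero.1 X.2, union_empty]
  simp

lemma transpose_inclMatrix_succ_mul_self (j : ℕ) :
    (inclMatrix V (j + 1) (j + 2))ᵀ * inclMatrix V (j + 1) (j + 2)
      = inclMatrix V j (j + 1) * (inclMatrix V j (j + 1))ᵀ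
        + ((Fintype.card V : ℝ) - 2 * (j + 1)) • 1 := by
  ext X Y
  rw [Matrix.add_apply, transpose_inclMatrix_mul_self_apply, inclMatrix_mul_transpose_self_apply,
    Matrix.smul_apply, one_apply, smul_eq_mul]
  have hsupset (S : Finset V) (hS : S.card ≤ j + 2) :
      #{A : {s : Finset V // s.card = j + 2} | S ⊆ A.1}
        = (Fintype.card V - S.card).choose (j + 2 - S.card) := by
    simpa [card_sdiff_of_subset (subset_univ S)] using
      card_filter_subset_subset (subset_univ S) hS
  have hsubset (S : Finset V) :
      #{Z : {s : Finset V // s.card = j} | Z.1 ⊆ S} = S.card.choose j := by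
    simpa using card_filter_subset_subset (empty_subset S) (Nat.zero_le j)
  split_ifs with hXY
  · subst hXY
    have hX : j + 1 ≤ Fintype.card V := X.2 ▸ card_le_univ X.1
    rw [union_self, inter_self, hsupset _ (by omega), hsubset, X.2,
      show j + 2 - (j + 1) = 1 by omega,
      Nat.choose_one_right, Nat.choose_succ_self_right, Nat.cast_sub hX]
    push_cast
    ring
  · have hcard : (X.1 ∪ Y.1).card + (X.1 ∩ Y.1).card = 2 * (j + 1) := by
      rw [card_union_add_card_inter, X.2, Y.2]; ring
    have hunion : j + 2 ≤ (X.1 ∪ Y.1).card := by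
      by_contra hlt
      have hX := eq_of_subset_of_card_le (subset_union_left (s₂ := Y.1)) (by rw [X.2]; omega)
      have hY := eq_of_subset_of_card_le (subset_union_right (s₁ := X.1)) (by rw [Y.2]; omega)
      exact hXY (Subtype.ext (hX.trans hY.symm))
    rw [mul_zero, add_zero, hsubset]
    -- both sides are `1` if `|X ∪ Y| = j + 2`, equivalently `|X ∩ Y| = j`, and `0` otherwise
    rcases hunion.eq_or_lt with hunion | hunion
    · rw [hsupset _ hunion.ge, ← hunion, Nat.sub_self, Nat.choose_zero_right,
        show (X.1 ∩ Y.1).card = j by omega, Nat.choose_self]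
    · rw [Nat.choose_eq_zero_of_lt (by omega), card_eq_zero.2, Nat.cast_zero]
      exact filter_eq_empty_iff.2 fun A _ hA => by have := card_le_card hA; omega

lemma inclMatrix_succ_mulVec_injective {j : ℕ} (hj : 2 * j < Fintype.card V) :
    Function.Injective (inclMatrix V j (j + 1)).mulVec := by
  have hc : (0 : ℝ) < Fintype.card V - 2 * j := by
    have := (Nat.cast_lt (α := ℝ)).2 hj
    push_cast at this
    linarith
  apply mulVec_injective_of_posDef_conjTranspose_mul_self
  rw [conjTranspose_eq_transpose_of_trivial]
  cases j with
  | zero =>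
    rw [transpose_inclMatrix_zero_mul_self]
    exact PosDef.one.smul (by simpa using hc)
  | succ j =>
    rw [transpose_inclMatrix_succ_mul_self]
    refine PosDef.posSemidef_add ?_ (PosDef.one.smul (by simpa using hc))
    simpa [conjTranspose_eq_transpose_of_trivial] using
      posSemidef_self_mul_conjTranspose (inclMatrix V j (j + 1))

lemma inclMatrix_mulVec_injective {h k : ℕ} (hhk : h ≤ k) (hk : 2 * k ≤ Fintype.card V) :
    Function.Injective (inclMatrix V h k).mulVec := by
  induction k, hhk using Nat.le_induction with
  | base =>
    intro x y hxy
    simpa [inclMatrix_self] using hxy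
  | succ k hhk ih =>
    intro x y hxy
    refine ih (by omega) (inclMatrix_succ_mulVec_injective (j := k) (by omega) ?_)
    rw [mulVec_mulVec, mulVec_mulVec, inclMatrix_mul_inclMatrix hhk, smul_mulVec, smul_mulVec, hxy]

end InclusionMatrix

noncomputable section

theorem stmt_2_general {n h k : ℕ} (G : SimpleGraph (Fin n)) (hhk : h < k)
    (hk : k ≤ n / 2) :
    (lapMat (tokenGraph G h)).charpoly ∣ (lapMat (tokenGraph G k)).charpoly :=
  charpoly_dvd_of_mul_eq_mul (lapMat_tokenGraph_mul_inclMatrix G h k)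
    (inclMatrix_mulVec_injective hhk.le (by rw [Fintype.card_fin]; omega))

theorem stmt_2 {n h k : ℕ} (G : SimpleGraph (Fin n)) (h1 : 1 ≤ h) (hhk : h < k)
    (hk : k ≤ n / 2) :
    (lapMat (tokenGraph G h)).charpoly ∣ (lapMat (tokenGraph G k)).charpoly :=
  stmt_2_general G hhk hk

end
end

section
/- Let G be a vertex-transitive simple graph on n > 3 vertices (for any two vertices u, v there is a graph automorphism of G sending u to v). If 2·α(G∖i) ≥ α(G) for some vertex i of G, then α(F_2(G)) = α(G). -/
/-!
The binomial matrix `B` (the `k`-set `A` ↦ indicator of `A`) intertwines the Laplacians: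
`L(F_k(G)) B = B L(G)`. So `B` maps a Fiedler vector of `G` to an eigenvector of `F₂(G)` with
the same eigenvalue, orthogonal to the constants, whence `α(F₂(G)) ≤ α(G)`.

Conversely let `x` be a Fiedler vector of `F₂(G)`. If `Bᵀx ≠ 0`, then by the transposed
intertwining `Bᵀx` is an eigenvector of `G` for `α(F₂(G))`, so `α(G) ≤ α(F₂(G))`. If `Bᵀx = 0`,
each restriction `x_m = x({m, ·})` is orthogonal to the constants on `G ∖ m`. Every edge of
`F₂(G)` joins `{m, s}` and `{m, t}` for a unique `m` and an edge `st` of `G ∖ m`, so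
`xᵀ L(F₂(G)) x = ∑ₘ x_mᵀ L(G ∖ m) x_m ≥ ∑ₘ α(G ∖ m) ‖x_m‖² = 2 α(G ∖ i) ‖x‖² ≥ α(G) ‖x‖²`,
where vertex-transitivity makes all the `α(G ∖ m)` equal.
-/

open Finset Polynomial Real Matrix

namespace Matrix

variable {W : Type*} [Fintype W] [DecidableEq W]

/-- Junk value `0` when `M` has fewer than two rows. -/
noncomputable def secondSmallestEigenvalue (M : Matrix W W ℝ) : ℝ :=
  ((M.charpoly.roots).sort (· ≤ ·)).getD 1 0

omit [DecidableEq W] in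
theorem exists_getD_one_sort_map_eq (μ : W → ℝ) (hW : 1 < Fintype.card W) :
    ∃ j₁ j₂, j₁ ≠ j₂ ∧ (∀ j, μ j₁ ≤ μ j) ∧
      ((univ.val.map μ).sort (· ≤ ·)).getD 1 0 = μ j₂ ∧ ∀ j ≠ j₁, μ j₂ ≤ μ j := by
  classical
  have : Nonempty W := Fintype.card_pos_iff.1 (by omega)
  obtain ⟨j₁, -, h₁⟩ := univ.exists_min_image μ univ_nonempty
  have hne : (univ.erase j₁).Nonempty := by
    rw [← card_pos, card_erase_of_mem (mem_univ _), card_univ]; omega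
  obtain ⟨j₂, hj₂, h₂⟩ := (univ.erase j₁).exists_min_image μ hne
  have hsort : (univ.val.map μ).sort (· ≤ ·) =
      μ j₁ :: μ j₂ :: (((univ.erase j₁).erase j₂).val.map μ).sort (· ≤ ·) := by
    rw [← Multiset.cons_erase (mem_univ_val j₁), ← erase_val,
      ← Multiset.cons_erase (show j₂ ∈ (univ.erase j₁).val from hj₂), ← erase_val,
      Multiset.map_cons, Multiset.map_cons, Multiset.sort_cons, Multiset.sort_cons]
    · simp only [Multiset.mem_map]
      rintro _ ⟨j, hj, rfl⟩
      exact h₂ j (mem_of_mem_erase hj)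
    · simp only [Multiset.mem_cons, Multiset.mem_map]
      rintro _ (rfl | ⟨j, -, rfl⟩) <;> exact h₁ _ (mem_univ _)
  refine ⟨j₁, j₂, (ne_of_mem_erase hj₂).symm, fun j => h₁ j (mem_univ j), by simp [hsort],
    fun j hj => h₂ j (mem_erase.2 ⟨hj, mem_univ j⟩)⟩

namespace IsHermitian

variable {M : Matrix W W ℝ} (hM : M.IsHermitian)
include hM

theorem exists_secondSmallestEigenvalue_eq (hW : 1 < Fintype.card W) :
    ∃ j₁ j₂, j₁ ≠ j₂ ∧ (∀ j, hM.eigenvalues j₁ ≤ hM.eigenvalues j) ∧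
      M.secondSmallestEigenvalue = hM.eigenvalues j₂ ∧
      ∀ j ≠ j₁, hM.eigenvalues j₂ ≤ hM.eigenvalues j := by
  have hroots : M.charpoly.roots = univ.val.map hM.eigenvalues := by
    rw [hM.roots_charpoly_eq_eigenvalues, RCLike.ofReal_real_eq_id, Function.id_comp]
  unfold secondSmallestEigenvalue
  rw [hroots]
  exact exists_getD_one_sort_map_eq _ hW

theorem dotProduct_eigenvectorBasis (i j : W) :
    ⇑(hM.eigenvectorBasis i) ⬝ᵥ ⇑(hM.eigenvectorBasis j) = if i = j then 1 else 0 := by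
  have := orthonormal_iff_ite.1 hM.eigenvectorBasis.orthonormal j i
  rw [EuclideanSpace.inner_eq_star_dotProduct, star_trivial] at this
  rw [this]
  exact if_congr eq_comm rfl rfl

omit [DecidableEq W] in
theorem dotProduct_mulVec_comm (x y : W → ℝ) : x ⬝ᵥ (M *ᵥ y) = (M *ᵥ x) ⬝ᵥ y := by
  rw [dotProduct_mulVec, ← vecMul_transpose, ← conjTranspose_eq_transpose_of_trivial, hM.eq]

theorem sum_sq_eigenvectorBasis_dotProduct (y : W → ℝ) :
    ∑ j, (⇑(hM.eigenvectorBasis j) ⬝ᵥ y) ^ 2 = y ⬝ᵥ y := by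
  have := hM.eigenvectorBasis.sum_inner_mul_inner (WithLp.toLp 2 y) (WithLp.toLp 2 y)
  simp only [EuclideanSpace.inner_eq_star_dotProduct, star_trivial] at this
  rw [← this]
  refine sum_congr rfl fun j _ => ?_
  rw [sq, dotProduct_comm]

theorem sum_eigenvalues_mul_sq (y : W → ℝ) :
    ∑ j, hM.eigenvalues j * (⇑(hM.eigenvectorBasis j) ⬝ᵥ y) ^ 2 = y ⬝ᵥ (M *ᵥ y) := by
  have := hM.eigenvectorBasis.sum_inner_mul_inner (WithLp.toLp 2 y) (WithLp.toLp 2 (M *ᵥ y))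
  simp only [EuclideanSpace.inner_eq_star_dotProduct, star_trivial] at this
  rw [dotProduct_comm, ← this]
  refine sum_congr rfl fun j _ => ?_
  change _ = (⇑(hM.eigenvectorBasis j) ⬝ᵥ y) * ((M *ᵥ y) ⬝ᵥ ⇑(hM.eigenvectorBasis j))
  rw [dotProduct_comm (M *ᵥ y), hM.dotProduct_mulVec_comm, hM.mulVec_eigenvectorBasis,
    smul_dotProduct, smul_eq_mul]
  ring

end IsHermitian

end Matrix

namespace Matrix.PosSemidef

variable {W : Type*} [Fintype W] [DecidableEq W] {M : Matrix W W ℝ}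
  (hM : M.PosSemidef) (hone : M *ᵥ (fun _ => 1) = 0) (hW : 1 < Fintype.card W)
include hM hone hW

theorem secondSmallestEigenvalue_mul_le {y : W → ℝ} (hy : ∑ v, y v = 0) :
    M.secondSmallestEigenvalue * (y ⬝ᵥ y) ≤ y ⬝ᵥ (M *ᵥ y) := by
  have hH := hM.isHermitian
  obtain ⟨j₁, j₂, -, -, hsnd, hge⟩ := hH.exists_secondSmallestEigenvalue_eq hW
  set e := fun j => ⇑(hH.eigenvectorBasis j)
  set lam := M.secondSmallestEigenvalue
  have hnn : 0 ≤ lam := hsnd ▸ hM.eigenvalues_nonneg j₂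
  have hyM : 0 ≤ y ⬝ᵥ (M *ᵥ y) := by simpa using hM.dotProduct_mulVec_nonneg y
  have hrayleigh : ∀ z, e j₁ ⬝ᵥ z = 0 → lam * (z ⬝ᵥ z) ≤ z ⬝ᵥ (M *ᵥ z) := by
    intro z hz
    rw [← hH.sum_sq_eigenvectorBasis_dotProduct, ← hH.sum_eigenvalues_mul_sq, mul_sum]
    refine sum_le_sum fun j _ => ?_
    by_cases hj : j = j₁
    · subst hj; simp [e, hz]
    · exact mul_le_mul_of_nonneg_right (hsnd ▸ hge j hj) (sq_nonneg _)
  have hsum : ∀ z : W → ℝ, (fun _ => 1) ⬝ᵥ z = ∑ v, z v := fun z => by simp [dotProduct]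
  -- shifting `y` by a constant leaves its energy unchanged and only increases its norm, and
  -- makes it orthogonal to `e j₁` unless the constants already are (which forces `lam = 0`)
  set d := e j₁ ⬝ᵥ (fun _ => 1)
  by_cases hd : d = 0
  · have h1 := hrayleigh _ hd
    rw [hone, dotProduct_zero, hsum] at h1
    have hzero : lam = 0 := by
      have : (0 : ℝ) < ∑ _v : W, 1 := by rw [sum_const, card_univ, nsmul_one, Nat.cast_pos]; omega
      nlinarith
    rw [hzero, zero_mul]
    exact hyM
  · set z := y - (e j₁ ⬝ᵥ y / d) • (fun _ => (1 : ℝ))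
    have hz : e j₁ ⬝ᵥ z = 0 := by
      simp only [z, dotProduct_sub, dotProduct_smul, smul_eq_mul]
      field_simp
      ring
    have hMz : M *ᵥ z = M *ᵥ y := by simp [z, mulVec_sub, mulVec_smul, hone]
    have hzMz : z ⬝ᵥ (M *ᵥ z) = y ⬝ᵥ (M *ᵥ y) := by
      have h1 : (fun _ => (1 : ℝ)) ⬝ᵥ (M *ᵥ y) = 0 := by
        rw [hH.dotProduct_mulVec_comm, hone, zero_dotProduct]
      rw [hMz]
      simp only [z, sub_dotProduct, smul_dotProduct, h1, smul_zero, sub_zero]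
    have hzz : y ⬝ᵥ y ≤ z ⬝ᵥ z := by
      have hsum' : y ⬝ᵥ (fun _ => 1) = ∑ v, y v := by rw [dotProduct_comm, hsum]
      simp only [z, sub_dotProduct, dotProduct_sub, smul_dotProduct, dotProduct_smul,
        smul_eq_mul, hsum, hsum', hy]
      nlinarith [sq_nonneg (e j₁ ⬝ᵥ y / d), show (0:ℝ) ≤ ∑ _v : W, 1 by positivity]
    calc lam * (y ⬝ᵥ y) ≤ lam * (z ⬝ᵥ z) := mul_le_mul_of_nonneg_left hzz hnn
      _ ≤ z ⬝ᵥ (M *ᵥ z) := hrayleigh z hz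
      _ = y ⬝ᵥ (M *ᵥ y) := hzMz

theorem secondSmallestEigenvalue_le_of_mulVec_eq {y : W → ℝ} {t : ℝ} (hy₀ : y ≠ 0)
    (hy : ∑ v, y v = 0) (ht : M *ᵥ y = t • y) : M.secondSmallestEigenvalue ≤ t := by
  have h := hM.secondSmallestEigenvalue_mul_le hone hW hy
  rw [ht, dotProduct_smul, smul_eq_mul] at h
  exact le_of_mul_le_mul_right h (by simpa using dotProduct_self_star_pos_iff.2 hy₀)

theorem exists_mulVec_eq_secondSmallestEigenvalue_smul :
    ∃ y : W → ℝ, y ≠ 0 ∧ ∑ v, y v = 0 ∧ M *ᵥ y = M.secondSmallestEigenvalue • y := by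
  have hH := hM.isHermitian
  obtain ⟨j₁, j₂, hne, hmin, hsnd, -⟩ := hH.exists_secondSmallestEigenvalue_eq hW
  set e := fun j => ⇑(hH.eigenvectorBasis j)
  set μ := hH.eigenvalues
  have heig : ∀ j, M *ᵥ e j = μ j • e j := hH.mulVec_eigenvectorBasis
  have hsum : ∀ z : W → ℝ, (fun _ => 1) ⬝ᵥ z = ∑ v, z v := fun z => by simp [dotProduct]
  -- the all-ones vector lies in the kernel, so it is orthogonal to `e j₂` unless `μ j₂ = 0`
  have hker : μ j₂ * ∑ v, e j₂ v = 0 := by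
    rw [← hsum, ← smul_eq_mul, ← dotProduct_smul, ← heig, hH.dotProduct_mulVec_comm, hone,
      zero_dotProduct]
  by_cases h₂ : ∑ v, e j₂ v = 0
  · exact ⟨e j₂, (WithLp.ofLp_eq_zero 2).ne.2 (hH.eigenvectorBasis.orthonormal.ne_zero j₂),
      h₂, hsnd ▸ heig j₂⟩
  have hμ₂ : μ j₂ = 0 := (mul_eq_zero.1 hker).resolve_right h₂
  have hμ₁ : μ j₁ = 0 := le_antisymm (hμ₂ ▸ hmin j₂) (hM.eigenvalues_nonneg j₁)
  refine ⟨(∑ v, e j₂ v) • e j₁ - (∑ v, e j₁ v) • e j₂, fun h => h₂ ?_, ?_, ?_⟩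
  · have := congrArg (· ⬝ᵥ e j₁) h
    simpa [e, sub_dotProduct, hH.dotProduct_eigenvectorBasis, hne.symm] using this
  · rw [← hsum, dotProduct_sub, dotProduct_smul, dotProduct_smul, hsum, hsum, smul_eq_mul,
      smul_eq_mul, mul_comm, sub_self]
  · rw [hsnd, hμ₂, zero_smul, mulVec_sub, mulVec_smul, mulVec_smul, heig, heig, hμ₁, hμ₂]
    simp only [zero_smul, smul_zero, sub_self]

end Matrix.PosSemidef

attribute [local instance] Classical.decRel

section Laplacian

variable {V : Type*} [Fintype V] [DecidableEq V] (G : SimpleGraph V)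

theorem posSemidef_lapMat : (lapMat G).PosSemidef := G.posSemidef_lapMatrix ℝ

theorem lapMat_mulVec_const_eq_zero : lapMat G *ᵥ (fun _ => 1) = 0 :=
  G.lapMatrix_mulVec_const_eq_zero

theorem transpose_lapMat : (lapMat G)ᵀ = lapMat G := G.isSymm_lapMatrix ℝ

theorem lapMat_mulVec_apply (x : V → ℝ) (u : V) :
    (lapMat G *ᵥ x) u = ∑ v, if G.Adj u v then x u - x v else 0 := by
  change (G.lapMatrix ℝ *ᵥ x) u = _
  rw [G.lapMatrix_mulVec_apply, G.degree_eq_sum_if_adj, sum_mul, G.neighborFinset_eq_filter,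
    sum_filter, ← sum_sub_distrib]
  exact sum_congr rfl fun v _ => by split_ifs <;> ring

theorem dotProduct_lapMat_mulVec (x : V → ℝ) :
    x ⬝ᵥ (lapMat G *ᵥ x) = (∑ u, ∑ v, if G.Adj u v then (x u - x v) ^ 2 else 0) / 2 := by
  rw [← G.lapMatrix_toLinearMap₂' ℝ x, toLinearMap₂'_apply']
  rfl

variable {G}

theorem algConn_mul_le (hV : 1 < Fintype.card V) {y : V → ℝ} (hy : ∑ v, y v = 0) :
    algConn G * (y ⬝ᵥ y) ≤ y ⬝ᵥ (lapMat G *ᵥ y) :=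
  (posSemidef_lapMat G).secondSmallestEigenvalue_mul_le (lapMat_mulVec_const_eq_zero G) hV hy

theorem algConn_le_of_lapMat_mulVec_eq (hV : 1 < Fintype.card V) {y : V → ℝ} {t : ℝ}
    (hy₀ : y ≠ 0) (hy : ∑ v, y v = 0) (ht : lapMat G *ᵥ y = t • y) : algConn G ≤ t :=
  (posSemidef_lapMat G).secondSmallestEigenvalue_le_of_mulVec_eq
    (lapMat_mulVec_const_eq_zero G) hV hy₀ hy ht

variable (G) in
theorem exists_lapMat_mulVec_eq_algConn_smul (hV : 1 < Fintype.card V) :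
    ∃ y : V → ℝ, y ≠ 0 ∧ ∑ v, y v = 0 ∧ lapMat G *ᵥ y = algConn G • y :=
  (posSemidef_lapMat G).exists_mulVec_eq_secondSmallestEigenvalue_smul
    (lapMat_mulVec_const_eq_zero G) hV

end Laplacian

namespace SimpleGraph.Iso

variable {V W : Type*} {G : SimpleGraph V} {H : SimpleGraph W}

theorem reindex_lapMat [Fintype V] [DecidableEq V] [Fintype W] [DecidableEq W] (f : G ≃g H) :
    (lapMat G).reindex f f = lapMat H := by
  ext u v
  change (G.lapMatrix ℝ) (f.symm u) (f.symm v) = H.lapMatrix ℝ u v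
  simp only [lapMatrix, degMatrix, Matrix.sub_apply, adjMatrix_apply, diagonal_apply,
    f.symm.injective.eq_iff, f.symm.map_adj_iff]
  rw [← f.degree_eq (f.symm u), f.apply_symm_apply]

theorem algConn_eq [Fintype V] [DecidableEq V] [Fintype W] [DecidableEq W] (f : G ≃g H) :
    algConn G = algConn H := by
  unfold algConn lapSpec
  rw [← f.reindex_lapMat, charpoly_reindex]

def deleteVert (f : G ≃g H) (m : V) : _root_.deleteVert G m ≃g _root_.deleteVert H (f m) where
  toEquiv := f.toEquiv.subtypeEquiv fun _ => f.injective.ne_iff.symm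
  map_rel_iff' := f.map_adj_iff

end SimpleGraph.Iso

section TokenGraph

variable {V : Type*} [Fintype V] [DecidableEq V] {G : SimpleGraph V} {k : ℕ}

omit [Fintype V] in
theorem tokenGraph_adj_iff_s9 {A C : {s : Finset V // s.card = k}} :
    (tokenGraph G k).Adj A C ↔
      ∃ a ∈ A.1, ∃ b ∉ A.1, G.Adj a b ∧ C.1 = insert b (A.1.erase a) := by
  constructor
  · rintro ⟨a, b, hab, ha, hb, hd⟩
    have hx : ∀ x, (x ∈ A.1 ∧ x ∉ C.1 ∨ x ∈ C.1 ∧ x ∉ A.1) ↔ x = a ∨ x = b := fun x => by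
      rw [← mem_symmDiff, hd, mem_insert, mem_singleton]
    have hbA : b ∉ A.1 := by grind
    refine ⟨a, ha, b, hbA, hab, ?_⟩
    ext x
    rw [mem_insert, mem_erase]
    grind
  · rintro ⟨a, ha, b, hb, hab, hC⟩
    refine ⟨a, b, hab, ha, by simp [hC], ?_⟩
    ext x
    rw [mem_symmDiff, hC, mem_insert, mem_erase, mem_insert, mem_singleton]
    grind

theorem sum_tokenGraph_adj (A : {s : Finset V // s.card = k}) (g : Finset V → ℝ) :
    ∑ C, (if (tokenGraph G k).Adj A C then g C.1 else 0) =
      ∑ a ∈ A.1, ∑ b ∈ A.1ᶜ with G.Adj a b, g (insert b (A.1.erase a)) := by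
  rw [← sum_filter, sum_sigma']
  symm
  refine sum_bij (fun p hp => ⟨insert p.2 (A.1.erase p.1), ?_⟩) ?_ ?_ ?_ (fun _ _ => rfl)
  · simp only [mem_sigma, mem_filter, mem_compl] at hp
    rw [card_insert_of_notMem (fun h => hp.2.1 (mem_of_mem_erase h)), card_erase_of_mem hp.1,
      A.2, Nat.sub_add_cancel (A.2 ▸ card_pos.2 ⟨_, hp.1⟩)]
  · rintro ⟨a, b⟩ hp
    simp only [mem_sigma, mem_filter, mem_compl] at hp
    simp only [mem_filter, mem_univ, true_and]
    exact tokenGraph_adj_iff_s9.2 ⟨a, hp.1, b, hp.2.1, hp.2.2, rfl⟩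
  · rintro ⟨a, b⟩ hp ⟨a', b'⟩ hp' h
    simp only [mem_sigma, mem_filter, mem_compl] at hp hp'
    have h := congrArg (fun C : {s : Finset V // s.card = k} => C.1) h
    simp only [Finset.ext_iff, mem_insert, mem_erase] at h
    obtain rfl : a = a' := by grind
    obtain rfl : b = b' := by grind
    rfl
  · intro C hC
    obtain ⟨a, ha, b, hb, hab, hC⟩ := tokenGraph_adj_iff_s9.1 (mem_filter.1 hC).2
    exact ⟨⟨a, b⟩, by simp [ha, hb, hab], Subtype.ext hC.symm⟩

theorem binomMatrix_mulVec_apply (y : V → ℝ) (A : {s : Finset V // s.card = k}) :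
    (binomMatrix V k *ᵥ y) A = ∑ j ∈ A.1, y j := by
  simp [binomMatrix, mulVec, dotProduct, ite_mul, sum_ite_mem]

theorem binomMatrix_transpose_mulVec_apply (x : {s : Finset V // s.card = k} → ℝ) (j : V) :
    ((binomMatrix V k)ᵀ *ᵥ x) j = ∑ A, if j ∈ A.1 then x A else 0 := by
  simp [binomMatrix, mulVec, dotProduct, ite_mul]

theorem sum_binomMatrix_transpose_mulVec (x : {s : Finset V // s.card = k} → ℝ) :
    ∑ j, ((binomMatrix V k)ᵀ *ᵥ x) j = k * ∑ A, x A := by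
  simp_rw [binomMatrix_transpose_mulVec_apply]
  rw [sum_comm, mul_sum]
  refine sum_congr rfl fun A _ => ?_
  rw [← sum_filter, sum_const, filter_mem_eq_inter, univ_inter, A.2, nsmul_eq_mul]

omit [Fintype V] [DecidableEq V] in
theorem sum_sum_adj_sub_eq_zero (s : Finset V) (y : V → ℝ) :
    ∑ a ∈ s, ∑ b ∈ s with G.Adj a b, (y a - y b) = 0 := by
  have h : ∑ a ∈ s, ∑ b ∈ s with G.Adj a b, (y a - y b) =
      ∑ a ∈ s, ∑ b ∈ s with G.Adj a b, (y b - y a) := by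
    simp_rw [sum_filter]
    rw [sum_comm]
    simp_rw [G.adj_comm]
  have hneg : ∑ a ∈ s, ∑ b ∈ s with G.Adj a b, (y b - y a) =
      -∑ a ∈ s, ∑ b ∈ s with G.Adj a b, (y a - y b) := by
    simp only [← sum_neg_distrib, neg_sub]
  linarith

variable (G k) in
theorem lapMat_tokenGraph_mul_binomMatrix :
    lapMat (tokenGraph G k) * binomMatrix V k = binomMatrix V k * lapMat G := by
  refine ext_iff_mulVec.2 fun y => funext fun A => ?_
  rw [← mulVec_mulVec, ← mulVec_mulVec, lapMat_mulVec_apply, binomMatrix_mulVec_apply]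
  simp_rw [binomMatrix_mulVec_apply, lapMat_mulVec_apply]
  rw [sum_tokenGraph_adj A (fun C => ∑ j ∈ A.1, y j - ∑ j ∈ C, y j)]
  have hswap : ∀ a ∈ A.1, ∀ b ∉ A.1,
      ∑ j ∈ A.1, y j - ∑ j ∈ insert b (A.1.erase a), y j = y a - y b := by
    intro a ha b hb
    rw [sum_insert fun h => hb (mem_of_mem_erase h), sum_erase_eq_sub ha]
    ring
  have hsplit : ∀ a, (∑ b, if G.Adj a b then y a - y b else 0) =
      ∑ b ∈ A.1ᶜ with G.Adj a b, (y a - y b) + ∑ b ∈ A.1 with G.Adj a b, (y a - y b) := by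
    intro a
    rw [sum_filter, sum_filter, sum_compl_add_sum]
  rw [sum_congr rfl fun a ha => sum_congr rfl fun b hb =>
      hswap a ha b (mem_compl.1 (mem_filter.1 hb).1), sum_congr rfl fun a _ => hsplit a,
    sum_add_distrib, sum_sum_adj_sub_eq_zero, add_zero]

variable (G k) in
theorem binomMatrix_transpose_mul_lapMat_tokenGraph :
    (binomMatrix V k)ᵀ * lapMat (tokenGraph G k) = lapMat G * (binomMatrix V k)ᵀ := by
  have h := congrArg transpose (lapMat_tokenGraph_mul_binomMatrix G k)
  rwa [transpose_mul, transpose_mul, transpose_lapMat, transpose_lapMat] at h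

end TokenGraph

section TwoTokens

variable {V : Type*} [Fintype V] [DecidableEq V] {G : SimpleGraph V}

def tokenPair (m : V) (s : {v // v ≠ m}) : {A : Finset V // A.card = 2} :=
  ⟨{m, s.1}, card_pair s.2.symm⟩

omit [Fintype V] in
theorem tokenPair_injective (m : V) : Function.Injective (tokenPair m) := by
  intro s t h
  have h := congrArg (s.1 ∈ ·.1) h
  simp only [tokenPair, mem_insert, mem_singleton, or_true, eq_iff_iff, true_iff] at h
  exact Subtype.ext (h.resolve_left s.2)

omit [Fintype V] in
theorem exists_eq_tokenPair {A : {A : Finset V // A.card = 2}} {m : V} (hm : m ∈ A.1) :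
    ∃ s, A = tokenPair m s := by
  obtain ⟨s, hs⟩ := card_eq_one.1 (by rw [card_erase_of_mem hm, A.2] : (A.1.erase m).card = 1)
  have hsm : s ≠ m := ne_of_mem_erase (hs ▸ mem_singleton_self s)
  exact ⟨⟨s, hsm⟩, Subtype.ext (by rw [tokenPair, ← insert_erase hm, hs])⟩

theorem card_subtype_ne (m : V) : Fintype.card {v // v ≠ m} = Fintype.card V - 1 := by
  rw [Fintype.card_subtype_compl, Fintype.card_subtype_eq]

theorem sum_comp_tokenPair (x : {A : Finset V // A.card = 2} → ℝ) (m : V) :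
    ∑ s, x (tokenPair m s) = ((binomMatrix V 2)ᵀ *ᵥ x) m := by
  rw [binomMatrix_transpose_mulVec_apply, ← sum_filter]
  refine sum_nbij (tokenPair m) (fun s _ => by simp [tokenPair])
    (tokenPair_injective m).injOn (fun A hA => ?_) (fun _ _ => rfl)
  obtain ⟨s, rfl⟩ := exists_eq_tokenPair (mem_filter.1 hA).2
  exact ⟨s, mem_univ _, rfl⟩

theorem sum_dotProduct_comp_tokenPair (x : {A : Finset V // A.card = 2} → ℝ) :
    ∑ m, (x ∘ tokenPair m) ⬝ᵥ (x ∘ tokenPair m) = 2 * (x ⬝ᵥ x) := by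
  have h := sum_binomMatrix_transpose_mulVec (k := 2) (fun A => x A * x A)
  simp_rw [← sum_comp_tokenPair] at h
  simpa [dotProduct] using h

theorem binomMatrix_mulVec_pair (y : V → ℝ) {a b : V} (hab : a ≠ b) :
    (binomMatrix V 2 *ᵥ y) ⟨{a, b}, card_pair hab⟩ = y a + y b := by
  rw [binomMatrix_mulVec_apply, sum_pair hab]

theorem sum_binomMatrix_two_mulVec (y : V → ℝ) :
    ∑ A, (binomMatrix V 2 *ᵥ y) A = (Fintype.card V - 1) * ∑ j, y j := by
  have hone : ∀ j, ((binomMatrix V 2)ᵀ *ᵥ fun _ => 1) j = Fintype.card V - 1 := fun j => by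
    rw [← sum_comp_tokenPair, sum_const, card_univ, nsmul_one, card_subtype_ne,
      Nat.cast_pred (Fintype.card_pos_iff.2 ⟨j⟩)]
  calc ∑ A, (binomMatrix V 2 *ᵥ y) A = (fun _ => 1) ⬝ᵥ (binomMatrix V 2 *ᵥ y) := by
        simp [dotProduct]
    _ = ((binomMatrix V 2)ᵀ *ᵥ fun _ => 1) ⬝ᵥ y := by
        rw [dotProduct_mulVec, ← mulVec_transpose]
    _ = (Fintype.card V - 1) * ∑ j, y j := by
        simp [dotProduct, hone, mul_sum]

theorem binomMatrix_two_mulVec_ne_zero (hV : 2 < Fintype.card V) {y : V → ℝ} (hy : y ≠ 0) :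
    binomMatrix V 2 *ᵥ y ≠ 0 := by
  refine fun h => hy (funext fun m => ?_)
  have hpair : ∀ a b, a ≠ b → y a + y b = 0 := fun a b hab => by
    rw [← binomMatrix_mulVec_pair y hab, h, Pi.zero_apply]
  obtain ⟨s, hs, t, ht, hst⟩ := one_lt_card.1
    (by rw [card_erase_of_mem (mem_univ m), card_univ]; omega : 1 < (univ.erase m).card)
  have := hpair m s (ne_of_mem_erase hs).symm
  have := hpair m t (ne_of_mem_erase ht).symm
  have := hpair s t hst
  simp only [Pi.zero_apply]
  linarith

omit [DecidableEq V] in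
theorem one_lt_card_pairs (hV : 2 < Fintype.card V) :
    1 < Fintype.card {A : Finset V // A.card = 2} := by
  rw [Fintype.card_finset_len]
  exact lt_of_lt_of_le (by decide) (Nat.choose_le_choose 2 hV)

theorem one_lt_card_subtype_ne (hV : 2 < Fintype.card V) (m : V) :
    1 < Fintype.card {v // v ≠ m} := by
  rw [card_subtype_ne]
  omega

/-- Every edge of `F₂(G)` is `{m, s} — {m, t}` for a unique vertex `m` and edge `st` of `G ∖ m`. -/
theorem sum_tokenGraph_two_adj
    (f : {A : Finset V // A.card = 2} → {A : Finset V // A.card = 2} → ℝ) :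
    ∑ A, ∑ C, (if (tokenGraph G 2).Adj A C then f A C else 0) =
      ∑ m, ∑ s, ∑ t, if (deleteVert G m).Adj s t then f (tokenPair m s) (tokenPair m t) else 0 := by
  have hsigma := Fintype.sum_sigma fun q : Σ m : V, {v // v ≠ m} × {v // v ≠ m} =>
    if (deleteVert G q.1).Adj q.2.1 q.2.2 then f (tokenPair q.1 q.2.1) (tokenPair q.1 q.2.2) else 0
  simp only [Fintype.sum_prod_type] at hsigma
  rw [← Fintype.sum_prod_type' (fun A C => if (tokenGraph G 2).Adj A C then f A C else 0),
    ← hsigma, ← sum_filter, ← sum_filter]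
  symm
  refine sum_nbij (fun q => (tokenPair q.1 q.2.1, tokenPair q.1 q.2.2)) ?_ ?_ ?_ fun _ _ => rfl
  · rintro ⟨m, s, t⟩ h
    simp only [mem_filter, mem_univ, true_and] at h ⊢
    have hst := G.ne_of_adj h
    refine tokenGraph_adj_iff_s9.2 ⟨s, by simp [tokenPair], t, ?_, h, ?_⟩
    · simp [tokenPair, t.2, hst.symm]
    · have := s.2
      ext x
      simp only [tokenPair, mem_insert, mem_erase, mem_singleton]
      grind
  · rintro ⟨m, s, t⟩ h ⟨m', s', t'⟩ - heq
    simp only [mem_coe, mem_filter, mem_univ, true_and] at h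
    simp only [Prod.mk.injEq] at heq
    obtain ⟨hs, ht⟩ := heq
    obtain rfl : m = m' := by
      have hs' := congrArg (·.1) hs
      have ht' := congrArg (·.1) ht
      simp only [tokenPair, Finset.ext_iff, mem_insert, mem_singleton] at hs' ht'
      have := hs' m; have := hs' m'; have := ht' m; have := ht' m'
      have := G.ne_of_adj h; have := s.2; have := t.2
      grind
    obtain rfl := tokenPair_injective m hs
    obtain rfl := tokenPair_injective m ht
    rfl
  · rintro ⟨A, C⟩ h
    simp only [mem_coe, mem_filter, mem_univ, true_and] at h
    obtain ⟨a, ha, b, hb, hab, hC⟩ := tokenGraph_adj_iff_s9.1 h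
    obtain ⟨m, rfl⟩ := exists_eq_tokenPair ha
    have hbm : b ≠ m := fun h => hb (by simp [tokenPair, h])
    refine ⟨⟨m, ⟨a, m.2.symm⟩, ⟨b, hbm⟩⟩, mem_coe.2 (mem_filter.2 ⟨mem_univ _, hab⟩), ?_⟩
    simp only [Prod.mk.injEq]
    refine ⟨Subtype.ext (pair_comm _ _), Subtype.ext ?_⟩
    have := m.2
    rw [hC]
    ext x
    simp only [tokenPair, mem_insert, mem_erase, mem_singleton]
    grind

theorem dotProduct_lapMat_tokenGraph_two (x : {A : Finset V // A.card = 2} → ℝ) :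
    x ⬝ᵥ (lapMat (tokenGraph G 2) *ᵥ x) =
      ∑ m, (x ∘ tokenPair m) ⬝ᵥ (lapMat (deleteVert G m) *ᵥ (x ∘ tokenPair m)) := by
  simp_rw [dotProduct_lapMat_mulVec, ← sum_div, sum_tokenGraph_two_adj (fun A C => (x A - x C) ^ 2)]
  rfl

end TwoTokens

section AlgebraicConnectivity

variable {V : Type*} [Fintype V] [DecidableEq V]

theorem algConn_tokenGraph_two_le (G : SimpleGraph V) (hV : 2 < Fintype.card V) :
    algConn (tokenGraph G 2) ≤ algConn G := by
  obtain ⟨y, hy₀, hy, hLy⟩ := exists_lapMat_mulVec_eq_algConn_smul G (by omega)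
  refine algConn_le_of_lapMat_mulVec_eq (one_lt_card_pairs hV)
    (binomMatrix_two_mulVec_ne_zero hV hy₀) (by rw [sum_binomMatrix_two_mulVec, hy, mul_zero]) ?_
  rw [mulVec_mulVec, lapMat_tokenGraph_mul_binomMatrix, ← mulVec_mulVec, hLy, mulVec_smul]

theorem algConn_le_algConn_tokenGraph_two {G : SimpleGraph V} (hV : 2 < Fintype.card V)
    (hG : ∀ m, algConn G ≤ 2 * algConn (deleteVert G m)) :
    algConn G ≤ algConn (tokenGraph G 2) := by
  obtain ⟨x, hx₀, hx, hLx⟩ :=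
    exists_lapMat_mulVec_eq_algConn_smul (tokenGraph G 2) (one_lt_card_pairs hV)
  by_cases hy₀ : (binomMatrix V 2)ᵀ *ᵥ x ≠ 0
  · refine algConn_le_of_lapMat_mulVec_eq (by omega) hy₀
      (by rw [sum_binomMatrix_transpose_mulVec, hx, mul_zero]) ?_
    rw [mulVec_mulVec, ← binomMatrix_transpose_mul_lapMat_tokenGraph, ← mulVec_mulVec, hLx,
      mulVec_smul]
  -- otherwise every link `x ∘ tokenPair m` is orthogonal to the constants on `G ∖ m`
  rw [not_not] at hy₀
  have hlink : ∀ m, algConn G * ((x ∘ tokenPair m) ⬝ᵥ (x ∘ tokenPair m)) ≤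
      2 * ((x ∘ tokenPair m) ⬝ᵥ (lapMat (deleteVert G m) *ᵥ (x ∘ tokenPair m))) := fun m =>
    calc algConn G * ((x ∘ tokenPair m) ⬝ᵥ (x ∘ tokenPair m))
        ≤ 2 * (algConn (deleteVert G m) * ((x ∘ tokenPair m) ⬝ᵥ (x ∘ tokenPair m))) := by
          rw [← mul_assoc]
          exact mul_le_mul_of_nonneg_right (hG m)
            (by simpa using dotProduct_self_star_nonneg (x ∘ tokenPair m))
      _ ≤ 2 * ((x ∘ tokenPair m) ⬝ᵥ (lapMat (deleteVert G m) *ᵥ (x ∘ tokenPair m))) :=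
          mul_le_mul_of_nonneg_left (algConn_mul_le (one_lt_card_subtype_ne hV m)
            (by rw [Function.comp_def, sum_comp_tokenPair, hy₀, Pi.zero_apply])) two_pos.le
  have hsum := sum_le_sum fun m (_ : m ∈ univ) => hlink m
  rw [← mul_sum, sum_dotProduct_comp_tokenPair, ← mul_sum, ← dotProduct_lapMat_tokenGraph_two, hLx,
    dotProduct_smul, smul_eq_mul] at hsum
  have hxx : 0 < x ⬝ᵥ x := by simpa using dotProduct_self_star_pos_iff.2 hx₀
  exact le_of_mul_le_mul_right (by linarith) hxx

end AlgebraicConnectivity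

noncomputable section

theorem stmt_9 {n : ℕ} (hn : 3 < n) (G : SimpleGraph (Fin n))
    (hvt : ∀ u v : Fin n, ∃ φ : G ≃g G, φ u = v)
    (i : Fin n) (hi : algConn G ≤ 2 * algConn (deleteVert G i)) :
    algConn (tokenGraph G 2) = algConn G := by
  have hV : 2 < Fintype.card (Fin n) := by rw [Fintype.card_fin]; omega
  have hG : ∀ m, algConn G ≤ 2 * algConn (deleteVert G m) := fun m => by
    obtain ⟨φ, hφ⟩ := hvt m i
    rwa [(φ.deleteVert m).algConn_eq, hφ]
  exact le_antisymm (algConn_tokenGraph_two_le G hV) (algConn_le_algConn_tokenGraph_two hV hG)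

end
end
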